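/- arXiv:1712.03772 — 4 statements merged into one kernel-verified Lean document; each statement's English description precedes it below -/
import Mathlib

section
/- For every x ∈ (0, π/2): (16/14175)·x⁷ + (8/467775)·x⁹ < 1/x + sin(2x)/(2x²) − 2·cot x − (8/45)x³ + (8/945)x⁵ < (16/14175)·x⁷ + (2/π)⁹·(2/π − π³/45 + π⁵/3780 − π⁷/113400)·x⁹. -/
/-!
Both bounds come from sandwiching `sin` and `cos` between consecutive Taylor polynomials,
which alternate around them on `[0, ∞)`. For the lower bound, multiplying by `2 x² sin x`
turns the claim into positivity of a polynomial in `x`, `sin x`, `cos x`; replacing each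
occurrence of `sin x`, `cos x` by the Taylor bound of the appropriate side leaves
`x¹⁴ Q(x²)` with `Q` positive on `[0, 5/2]`. For the upper bound, the same argument shows
that `(f x - 16 x⁷ / 14175) / x⁹` has positive derivative on `(0, π/2)`, so it is bounded by
its value at `π / 2`, which is the constant of the theorem.
-/

open Real Finset
open scoped Nat

noncomputable def sinTaylor (n : ℕ) (x : ℝ) : ℝ :=
  ∑ k ∈ range n, (-1) ^ k * x ^ (2 * k + 1) / (2 * k + 1)!

noncomputable def cosTaylor (n : ℕ) (x : ℝ) : ℝ :=
  ∑ k ∈ range n, (-1) ^ k * x ^ (2 * k) / (2 * k)!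

theorem hasDerivAt_sinTaylor (n : ℕ) (x : ℝ) :
    HasDerivAt (sinTaylor n) (cosTaylor n x) x := by
  refine HasDerivAt.fun_sum fun k _ => ?_
  refine (((hasDerivAt_pow (2 * k + 1) x).const_mul ((-1 : ℝ) ^ k)).div_const
    ((2 * k + 1)! : ℝ)).congr_deriv ?_
  rw [Nat.factorial_succ]
  push_cast
  field_simp

theorem cosTaylor_succ (n : ℕ) (x : ℝ) :
    cosTaylor (n + 1) x = 1 - ∑ k ∈ range n, (-1) ^ k * x ^ (2 * k + 2) / (2 * k + 2)! := by
  simp [cosTaylor, sum_range_succ', pow_succ, mul_add, neg_div, sub_eq_neg_add]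

theorem hasDerivAt_cosTaylor_succ (n : ℕ) (x : ℝ) :
    HasDerivAt (cosTaylor (n + 1)) (-sinTaylor n x) x := by
  rw [show cosTaylor (n + 1) = _ from funext (cosTaylor_succ n)]
  refine (HasDerivAt.fun_sum (u := range n)
    (A' := fun k => (-1) ^ k * x ^ (2 * k + 1) / (2 * k + 1)!) fun k _ => ?_).const_sub (1 : ℝ)
  refine (((hasDerivAt_pow (2 * k + 2) x).const_mul ((-1 : ℝ) ^ k)).div_const
    ((2 * k + 2)! : ℝ)).congr_deriv ?_
  rw [Nat.factorial_succ (2 * k + 1)]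
  push_cast
  field_simp
  ring

theorem nonneg_of_hasDerivAt_nonneg {f f' : ℝ → ℝ} (hf : ∀ x, HasDerivAt f (f' x) x)
    (h₀ : 0 ≤ f 0) (hf' : ∀ x, 0 ≤ x → 0 ≤ f' x) {x : ℝ} (hx : 0 ≤ x) : 0 ≤ f x :=
  h₀.trans <| monotoneOn_of_hasDerivWithinAt_nonneg (convex_Ici 0)
    (fun y _ => (hf y).continuousAt.continuousWithinAt)
    (fun y _ => (hf y).hasDerivWithinAt)
    (fun y hy => hf' y (interior_subset hy)) Set.self_mem_Ici hx hx

theorem sinTaylor_sub_sin_alternating_of_cos {n : ℕ}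
    (hcos : ∀ y, 0 ≤ y → 0 ≤ (-1) ^ n * (cosTaylor (n + 1) y - cos y))
    {x : ℝ} (hx : 0 ≤ x) :
    0 ≤ (-1) ^ n * (sinTaylor (n + 1) x - sin x) :=
  nonneg_of_hasDerivAt_nonneg
    (fun y => ((hasDerivAt_sinTaylor _ y).sub (hasDerivAt_sin y)).const_mul _)
    (by simp [sinTaylor]) hcos hx

theorem cosTaylor_sub_cos_alternating (n : ℕ) {x : ℝ} (hx : 0 ≤ x) :
    0 ≤ (-1) ^ n * (cosTaylor (n + 1) x - cos x) := by
  induction n generalizing x with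
  | zero => simpa [cosTaylor] using cos_le_one x
  | succ n ih =>
    refine nonneg_of_hasDerivAt_nonneg
      (fun y => ((hasDerivAt_cosTaylor_succ _ y).sub (hasDerivAt_cos y)).const_mul _)
      (by simp [cosTaylor_succ]) (fun y hy => ?_) hx
    have := sinTaylor_sub_sin_alternating_of_cos (fun z hz => ih hz) hy
    rw [pow_succ]
    linarith

theorem sinTaylor_sub_sin_alternating (n : ℕ) {x : ℝ} (hx : 0 ≤ x) :
    0 ≤ (-1) ^ n * (sinTaylor (n + 1) x - sin x) :=
  sinTaylor_sub_sin_alternating_of_cos (fun _ hy => cosTaylor_sub_cos_alternating n hy) hx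

theorem sin_le_sinTaylor (n : ℕ) {x : ℝ} (hx : 0 ≤ x) :
    sin x ≤ sinTaylor (2 * n + 1) x := by
  have := sinTaylor_sub_sin_alternating (2 * n) hx
  rw [pow_mul, neg_one_sq, one_pow, one_mul] at this
  linarith

theorem sinTaylor_le_sin (n : ℕ) {x : ℝ} (hx : 0 ≤ x) :
    sinTaylor (2 * n + 2) x ≤ sin x := by
  have := sinTaylor_sub_sin_alternating (2 * n + 1) hx
  rw [pow_succ, pow_mul, neg_one_sq, one_pow, one_mul] at this
  linarith

theorem cos_le_cosTaylor (n : ℕ) {x : ℝ} (hx : 0 ≤ x) :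
    cos x ≤ cosTaylor (2 * n + 1) x := by
  have := cosTaylor_sub_cos_alternating (2 * n) hx
  rw [pow_mul, neg_one_sq, one_pow, one_mul] at this
  linarith

theorem cosTaylor_le_cos (n : ℕ) {x : ℝ} (hx : 0 ≤ x) :
    cosTaylor (2 * n + 2) x ≤ cos x := by
  have := cosTaylor_sub_cos_alternating (2 * n + 1) hx
  rw [pow_succ, pow_mul, neg_one_sq, one_pow, one_mul] at this
  linarith

theorem sinTaylor_eight_nonneg {x : ℝ} (hx : 0 ≤ x) (hx2 : x ^ 2 ≤ 5 / 2) :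
    0 ≤ sinTaylor 8 x := by
  have hp (k : ℕ) : 0 ≤ x ^ k * (5 / 2 - x ^ 2) := mul_nonneg (pow_nonneg hx k) (by linarith)
  simp only [sinTaylor, sum_range_succ, sum_range_zero]
  norm_num [Nat.factorial]
  -- In `t = x²` the coefficients alternate and each positive one exceeds `5/2` times the next,
  -- so grouping consecutive terms as `x ^ k * (a - b t)` with `a ≥ 5/2 b` shows positivity.
  nlinarith [hp 1, hp 5, hp 9, hp 13]

noncomputable def wilkerF (x : ℝ) : ℝ :=
  1 / x + sin (2 * x) / (2 * x ^ 2) - 2 * cot x - (8 / 45) * x ^ 3 + (8 / 945) * x ^ 5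

noncomputable def wilkerLowerNum (x s c : ℝ) : ℝ :=
  2 * x * s + 2 * s ^ 2 * c - 4 * x ^ 2 * c - (16 / 45) * x ^ 5 * s + (16 / 945) * x ^ 7 * s
    - (32 / 14175) * x ^ 9 * s - (16 / 467775) * x ^ 11 * s

theorem wilkerF_sub_eq {x : ℝ} (hx : x ≠ 0) (hs : sin x ≠ 0) :
    wilkerF x - ((16 / 14175) * x ^ 7 + (8 / 467775) * x ^ 9)
      = wilkerLowerNum x (sin x) (cos x) / (2 * x ^ 2 * sin x) := by
  rw [eq_div_iff (by positivity), wilkerF, wilkerLowerNum, cot_eq_cos_div_sin, sin_two_mul]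
  field_simp
  ring

noncomputable def wilkerDerivNum (x s c : ℝ) : ℝ :=
  -9 * x * s ^ 2 - 2 * x * s ^ 4 - 11 * s ^ 3 * c + 2 * x ^ 3 + 18 * x ^ 2 * s * c
    + (16 / 15) * x ^ 5 * s ^ 2 - (32 / 945) * x ^ 7 * s ^ 2 + (32 / 14175) * x ^ 9 * s ^ 2

theorem hasDerivAt_wilkerF_div {x : ℝ} (hx : x ≠ 0) (hs : sin x ≠ 0) :
    HasDerivAt (fun y => (wilkerF y - (16 / 14175) * y ^ 7) / y ^ 9)
      (wilkerDerivNum x (sin x) (cos x) / (x ^ 12 * sin x ^ 2)) x := by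
  have hcot : HasDerivAt cot (-1 / sin x ^ 2) x := by
    rw [show cot = fun y => cos y / sin y from funext cot_eq_cos_div_sin]
    refine ((hasDerivAt_cos x).div (hasDerivAt_sin x) hs).congr_deriv ?_
    field_simp
    linear_combination -sin_sq_add_cos_sq x
  have hF : HasDerivAt wilkerF _ x :=
    (((((hasDerivAt_id x).inv hx).const_mul 1).add
      (((hasDerivAt_id x).const_mul 2).sin.div ((hasDerivAt_pow 2 x).const_mul 2)
        (by positivity))).sub (hcot.const_mul 2) |>.sub
      ((hasDerivAt_pow 3 x).const_mul _)).add ((hasDerivAt_pow 5 x).const_mul _)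
  refine ((hF.sub ((hasDerivAt_pow 7 x).const_mul _)).div (hasDerivAt_pow 9 x)
    (pow_ne_zero 9 hx)).congr_deriv ?_
  simp only [Pi.sub_apply, wilkerF, cot_eq_cos_div_sin, sin_two_mul, cos_two_mul, wilkerDerivNum,
    id]
  field_simp
  rw [cos_sq']
  ring

theorem wilkerLowerNum_pos {x : ℝ} (hx : 0 < x) (hx2 : x ^ 2 ≤ 5 / 2)
    (hc : 0 ≤ cos x) :
    0 < wilkerLowerNum x (sin x) (cos x) := by
  have hsL := sinTaylor_le_sin 3 hx.le
  have hsU := sin_le_sinTaylor 3 hx.le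
  have hcL := cosTaylor_le_cos 3 hx.le
  have hcU := cos_le_cosTaylor 4 hx.le
  have hsL0 := sinTaylor_eight_nonneg hx.le hx2
  have hss : sinTaylor 8 x ^ 2 * cosTaylor 8 x ≤ sin x ^ 2 * cos x :=
    (mul_le_mul_of_nonneg_left hcL (sq_nonneg _)).trans
      (mul_le_mul_of_nonneg_right (pow_le_pow_left₀ hsL0 hsL 2) hc)
  have hpoly : 0 < 2 * x * sinTaylor 8 x + 2 * sinTaylor 8 x ^ 2 * cosTaylor 8 x
      - 4 * x ^ 2 * cosTaylor 9 x - (16 / 45) * x ^ 5 * sinTaylor 7 x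
      + (16 / 945) * x ^ 7 * sinTaylor 8 x - (32 / 14175) * x ^ 9 * sinTaylor 7 x
      - (16 / 467775) * x ^ 11 * sinTaylor 7 x := by
    have hp (k : ℕ) : 0 ≤ x ^ k * (5 / 2 - x ^ 2) :=
      mul_nonneg (pow_nonneg hx.le k) (by linarith)
    have h14 : 0 < x ^ 14 := by positivity
    simp only [sinTaylor, cosTaylor, sum_range_succ, sum_range_zero]
    norm_num [Nat.factorial]
    -- the same grouping as in `sinTaylor_eight_nonneg`, for `x ^ 14 * Q (x ^ 2)`
    nlinarith [hp 14, hp 18, hp 22, hp 26, hp 30, hp 34, hp 38, hp 42]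
  unfold wilkerLowerNum
  have hx0 := hx.le
  linarith [mul_le_mul_of_nonneg_left hsL hx0,
    mul_le_mul_of_nonneg_left hcU (pow_nonneg hx0 2),
    mul_le_mul_of_nonneg_left hsU (pow_nonneg hx0 5),
    mul_le_mul_of_nonneg_left hsL (pow_nonneg hx0 7),
    mul_le_mul_of_nonneg_left hsU (pow_nonneg hx0 9),
    mul_le_mul_of_nonneg_left hsU (pow_nonneg hx0 11)]

theorem wilkerDerivNum_pos {x : ℝ} (hx : 0 < x) (hx2 : x ^ 2 ≤ 5 / 2)
    (hc : 0 ≤ cos x) :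
    0 < wilkerDerivNum x (sin x) (cos x) := by
  have hsL := sinTaylor_le_sin 3 hx.le
  have hsU := sin_le_sinTaylor 3 hx.le
  have hcL := cosTaylor_le_cos 3 hx.le
  have hcU := cos_le_cosTaylor 4 hx.le
  have hsL0 := sinTaylor_eight_nonneg hx.le hx2
  have hs := hsL0.trans hsL
  have hsU2 := pow_le_pow_left₀ hs hsU 2
  have hsL2 := pow_le_pow_left₀ hsL0 hsL 2
  have hsc : sinTaylor 8 x * cosTaylor 8 x ≤ sin x * cos x :=
    (mul_le_mul_of_nonneg_left hcL hsL0).trans (mul_le_mul_of_nonneg_right hsL hc)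
  have hs3c : sin x ^ 3 * cos x ≤ sinTaylor 7 x ^ 3 * cosTaylor 9 x :=
    mul_le_mul (pow_le_pow_left₀ hs hsU 3) hcU hc (pow_nonneg (hs.trans hsU) 3)
  have hpoly : 0 < -9 * x * sinTaylor 7 x ^ 2 - 2 * x * sinTaylor 7 x ^ 4
      - 11 * sinTaylor 7 x ^ 3 * cosTaylor 9 x + 2 * x ^ 3
      + 18 * x ^ 2 * (sinTaylor 8 x * cosTaylor 8 x) + (16 / 15) * x ^ 5 * sinTaylor 8 x ^ 2
      - (32 / 945) * x ^ 7 * sinTaylor 7 x ^ 2 + (32 / 14175) * x ^ 9 * sinTaylor 8 x ^ 2 := by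
    have hp (k : ℕ) : 0 ≤ x ^ k * (5 / 2 - x ^ 2) :=
      mul_nonneg (pow_nonneg hx.le k) (by linarith)
    have h15 : 0 < x ^ 15 := by positivity
    simp only [sinTaylor, cosTaylor, sum_range_succ, sum_range_zero]
    norm_num [Nat.factorial]
    -- the same grouping as in `sinTaylor_eight_nonneg`, for `x ^ 15 * Q (x ^ 2)`
    nlinarith [hp 15, hp 19, hp 23, hp 27, hp 31, hp 35, hp 39, hp 43, hp 47, hp 53,
      pow_nonneg hx.le 51]
  unfold wilkerDerivNum
  have hx0 := hx.le
  linarith [mul_le_mul_of_nonneg_left hsU2 hx0,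
    mul_le_mul_of_nonneg_left (pow_le_pow_left₀ hs hsU 4) hx0,
    mul_le_mul_of_nonneg_left hsc (pow_nonneg hx0 2),
    mul_le_mul_of_nonneg_left hsL2 (pow_nonneg hx0 5),
    mul_le_mul_of_nonneg_left hsU2 (pow_nonneg hx0 7),
    mul_le_mul_of_nonneg_left hsL2 (pow_nonneg hx0 9)]

theorem sq_le_five_halves_of_le_pi_div_two {x : ℝ} (hx : 0 ≤ x) (hxπ : x ≤ π / 2) :
    x ^ 2 ≤ 5 / 2 := by
  nlinarith [pi_lt_d2]

theorem strictMonoOn_wilkerF_div :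
    StrictMonoOn (fun y => (wilkerF y - (16 / 14175) * y ^ 7) / y ^ 9) (Set.Ioc 0 (π / 2)) := by
  have hsin {y : ℝ} (hy : y ∈ Set.Ioc 0 (π / 2)) : 0 < sin y :=
    sin_pos_of_pos_of_lt_pi hy.1 (by linarith [hy.2, pi_pos])
  have hderiv {y : ℝ} (hy : y ∈ Set.Ioc 0 (π / 2)) :=
    hasDerivAt_wilkerF_div hy.1.ne' (hsin hy).ne'
  refine strictMonoOn_of_hasDerivWithinAt_pos (convex_Ioc 0 (π / 2))
    (fun y hy => (hderiv hy).continuousAt.continuousWithinAt)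
    (fun y hy => (hderiv (interior_subset hy)).hasDerivWithinAt) fun y hy => ?_
  rw [interior_Ioc] at hy
  have hc : 0 ≤ cos y := cos_nonneg_of_mem_Icc ⟨by linarith [hy.1, pi_pos], hy.2.le⟩
  have hs := hsin (Set.Ioo_subset_Ioc_self hy)
  have hy2 := sq_le_five_halves_of_le_pi_div_two hy.1.le hy.2.le
  exact div_pos (wilkerDerivNum_pos hy.1 hy2 hc) (mul_pos (pow_pos hy.1 12) (pow_pos hs 2))

theorem wilkerF_div_at_pi_div_two :
    (wilkerF (π / 2) - (16 / 14175) * (π / 2) ^ 7) / (π / 2) ^ 9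
      = (2 / π) ^ 9 * (2 / π - π ^ 3 / 45 + π ^ 5 / 3780 - π ^ 7 / 113400) := by
  rw [wilkerF, show 2 * (π / 2) = π by ring, sin_pi, cot_eq_cos_div_sin, cos_pi_div_two]
  field_simp
  ring

theorem wilker_m4 (x : ℝ) (hx : x ∈ Set.Ioo 0 (π / 2)) :
    (16 / 14175) * x ^ 7 + (8 / 467775) * x ^ 9
      < 1 / x + Real.sin (2 * x) / (2 * x ^ 2) - 2 * Real.cot x
          - (8 / 45) * x ^ 3 + (8 / 945) * x ^ 5 ∧
    1 / x + Real.sin (2 * x) / (2 * x ^ 2) - 2 * Real.cot x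
        - (8 / 45) * x ^ 3 + (8 / 945) * x ^ 5
      < (16 / 14175) * x ^ 7
        + (2 / π) ^ 9 * (2 / π - π ^ 3 / 45 + π ^ 5 / 3780 - π ^ 7 / 113400) * x ^ 9 := by
  obtain ⟨hx0, hxπ⟩ := hx
  have hs : 0 < sin x := sin_pos_of_pos_of_lt_pi hx0 (by linarith [pi_pos])
  have hc : 0 ≤ cos x := cos_nonneg_of_mem_Icc ⟨by linarith [pi_pos], hxπ.le⟩
  change _ < wilkerF x ∧ wilkerF x < _
  constructor
  · have hx2 := sq_le_five_halves_of_le_pi_div_two hx0.le hxπ.le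
    have hlower := div_pos (wilkerLowerNum_pos hx0 hx2 hc) (by positivity : 0 < 2 * x ^ 2 * sin x)
    rw [← wilkerF_sub_eq hx0.ne' hs.ne'] at hlower
    linarith
  · have hupper := strictMonoOn_wilkerF_div ⟨hx0, hxπ.le⟩ ⟨by linarith, le_rfl⟩ hxπ
    dsimp only at hupper
    rw [wilkerF_div_at_pi_div_two, div_lt_iff₀ (by positivity)] at hupper
    linarith
end

section
/- For every x ∈ (0,1): x⁵/180 + x⁷/189 < arcsin x − 3x/(2+√(1−x²)) < x⁵/180 + (−271/180 + π/2)·x⁷. -/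
/-!
Write `s = √(1 - x²)`. The remainder `f x = arcsin x - 3x / (2 + s)` of Shafer's approximation has
`f' x = (1 - s)² / (s (2 + s)²) = x⁴/36 + x⁶ w(s)` with `w` strictly decreasing on `(0, ∞)` and
`w 1 = 1/27`, so `x ↦ w(√(1 - x²))` increases strictly on `[0, 1)` from `1/27`.
For the lower bound, `f - x⁵/180 - x⁷/189` has derivative `x⁶ (w(s) - 1/27) > 0` and vanishes at `0`.
For the upper bound, `G = x⁵/180 + c x⁷ - f` has derivative `x⁶ (7c - w(s))`, which changes sign at most
once, from positive to negative; since `G 0 = G 1 = 0` (this is what fixes `c`), `G > 0` on `(0, 1)`.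
-/

open Real Set

lemma min_lt_of_hasDerivAt_of_sign_change {G G' : ℝ → ℝ} {a b x : ℝ}
    (hG : ContinuousOn G (Icc a b)) (hG' : ∀ y ∈ Ioo a b, HasDerivAt G (G' y) y)
    (hsign : ∀ y ∈ Ioo a b, ∀ z ∈ Ioo a b, y < z → G' y ≤ 0 → G' z < 0)
    (hx : x ∈ Ioo a b) : min (G a) (G b) < G x := by
  by_cases hpos : ∀ y ∈ Ioo a x, 0 < G' y
  · have hmono : StrictMonoOn G (Icc a x) :=
      strictMonoOn_of_hasDerivWithinAt_pos (convex_Icc a x)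
        (hG.mono (Icc_subset_Icc_right hx.2.le))
        (fun y hy ↦ by
          rw [interior_Icc] at hy ⊢
          exact (hG' y ⟨hy.1, hy.2.trans hx.2⟩).hasDerivWithinAt)
        (by simpa only [interior_Icc] using hpos)
    exact (min_le_left _ _).trans_lt
      (hmono (left_mem_Icc.2 hx.1.le) (right_mem_Icc.2 hx.1.le) hx.1)
  · push Not at hpos
    obtain ⟨y, hy, hGy⟩ := hpos
    have hanti : StrictAntiOn G (Icc y b) :=
      strictAntiOn_of_hasDerivWithinAt_neg (convex_Icc y b)
        (hG.mono (Icc_subset_Icc_left hy.1.le))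
        (fun z hz ↦ by
          rw [interior_Icc] at hz ⊢
          exact (hG' z ⟨hy.1.trans hz.1, hz.2⟩).hasDerivWithinAt)
        (fun z hz ↦ by
          rw [interior_Icc] at hz
          exact hsign y ⟨hy.1, hy.2.trans hx.2⟩ z ⟨hy.1.trans hz.1, hz.2⟩ hz.1 hGy)
    exact (min_le_right _ _).trans_lt
      (hanti ⟨hy.2.le, hx.2.le⟩ (right_mem_Icc.2 (hy.2.trans hx.2).le) hx.2)

namespace Shafer

noncomputable def remainder (x : ℝ) : ℝ := arcsin x - 3 * x / (2 + √(1 - x ^ 2))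

/-- This is `(s⁴ + 7s³ + 20s² + 32s + 36) / (36 s (1 + s)³ (2 + s)²)`, with the numerator expanded
in powers of `u = 1 + s` as `u⁴ + 3u³ + 5u² + 9u + 18` so that every factor is visibly positive and
decreasing. -/
noncomputable def weight (s : ℝ) : ℝ :=
  (1 + 1 / s) / (2 + s) ^ 2 *
    (1 + 3 / (1 + s) + 5 / (1 + s) ^ 2 + 9 / (1 + s) ^ 3 + 18 / (1 + s) ^ 4) / 36

lemma weight_one : weight 1 = 1 / 27 := by norm_num [weight]

lemma weight_strictAntiOn : StrictAntiOn weight (Ioi 0) := by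
  intro s (hs : 0 < s) t (ht : 0 < t) hst
  unfold weight
  gcongr

lemma one_sub_sq_div_eq_add_weight (s : ℝ) (hs : 0 < s) :
    (1 - s) ^ 2 / (s * (2 + s) ^ 2) = (1 - s ^ 2) ^ 2 / 36 + (1 - s ^ 2) ^ 3 * weight s := by
  unfold weight
  field_simp
  ring

lemma remainder_zero : remainder 0 = 0 := by simp [remainder]

lemma remainder_one : remainder 1 = π / 2 - 3 / 2 := by norm_num [remainder]

@[fun_prop]
lemma continuous_remainder : Continuous remainder :=
  continuous_arcsin.sub <| (continuous_const.mul continuous_id).div (by fun_prop)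
    fun x ↦ by positivity

lemma hasDerivAt_remainder {x : ℝ} (hx : x ∈ Ioo (-1) 1) :
    HasDerivAt remainder (x ^ 4 / 36 + x ^ 6 * weight √(1 - x ^ 2)) x := by
  have h1x : 0 < 1 - x ^ 2 := by nlinarith [hx.1, hx.2]
  set s := √(1 - x ^ 2) with hs
  have hs0 : 0 < s := sqrt_pos.2 h1x
  have hs2 : s ^ 2 = 1 - x ^ 2 := sq_sqrt h1x.le
  have hden : HasDerivAt (fun y ↦ 2 + √(1 - y ^ 2)) (-(2 * x) / (2 * s)) x := by
    have := ((hasDerivAt_pow 2 x).const_sub 1).sqrt h1x.ne'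
    simpa using this.const_add 2
  have := (hasDerivAt_arcsin hx.1.ne' hx.2.ne).sub
    (((hasDerivAt_id x).const_mul 3).div hden (by positivity))
  refine HasDerivAt.congr_deriv (f := remainder) this ?_
  have hx2 : x ^ 2 = 1 - s ^ 2 := by linarith
  rw [show x ^ 4 = (1 - s ^ 2) ^ 2 by rw [← hx2]; ring,
    show x ^ 6 = (1 - s ^ 2) ^ 3 by rw [← hx2]; ring, ← one_sub_sq_div_eq_add_weight s hs0, ← hs]
  simp only [id]
  field_simp
  linear_combination (-3) * hs2

lemma weight_sqrt_strictMonoOn : StrictMonoOn (fun x ↦ weight √(1 - x ^ 2)) (Ico 0 1) := by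
  intro x hx y hy hxy
  apply weight_strictAntiOn (sqrt_pos.2 (by nlinarith [hy.1, hy.2]))
    (sqrt_pos.2 (by nlinarith [hx.1, hx.2]))
  apply sqrt_lt_sqrt (by nlinarith [hy.1, hy.2])
  nlinarith [hx.1]

lemma lower_bound {x : ℝ} (hx : x ∈ Ioo 0 1) : x ^ 5 / 180 + x ^ 7 / 189 < remainder x := by
  have hF : StrictMonoOn (fun x ↦ remainder x - x ^ 5 / 180 - x ^ 7 / 189) (Icc 0 1) := by
    refine strictMonoOn_of_hasDerivWithinAt_pos (convex_Icc 0 1) (by fun_prop)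
      (f' := fun x ↦ x ^ 6 * (weight √(1 - x ^ 2) - 1 / 27)) (fun y hy ↦ ?_) (fun y hy ↦ ?_)
    · rw [interior_Icc] at hy ⊢
      have := ((hasDerivAt_remainder ⟨by linarith [hy.1], hy.2⟩).sub
        ((hasDerivAt_pow 5 y).div_const 180)).sub ((hasDerivAt_pow 7 y).div_const 189)
      exact (this.congr_deriv (by norm_num; ring)).hasDerivWithinAt
    · rw [interior_Icc] at hy
      have := weight_sqrt_strictMonoOn (left_mem_Ico.2 one_pos) ⟨hy.1.le, hy.2⟩ hy.1
      norm_num [weight_one] at this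
      have := pow_pos hy.1 6
      nlinarith
  have := hF ⟨le_rfl, zero_le_one⟩ ⟨hx.1.le, hx.2.le⟩ hx.1
  simp only [remainder_zero] at this
  linarith

lemma upper_bound {x : ℝ} (hx : x ∈ Ioo 0 1) :
    remainder x < x ^ 5 / 180 + (-(271 / 180) + π / 2) * x ^ 7 := by
  set c := -(271 / 180) + π / 2
  have hG := min_lt_of_hasDerivAt_of_sign_change
    (G := fun y ↦ y ^ 5 / 180 + c * y ^ 7 - remainder y)
    (G' := fun y ↦ y ^ 6 * (7 * c - weight √(1 - y ^ 2))) (by fun_prop) (fun y hy ↦ ?_)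
    (fun y hy z hz hyz hGy ↦ ?_) hx
  · have h0 : (0 : ℝ) ^ 5 / 180 + c * 0 ^ 7 - remainder 0 = 0 := by simp [remainder_zero]
    have h1 : (1 : ℝ) ^ 5 / 180 + c * 1 ^ 7 - remainder 1 = 0 := by rw [remainder_one]; ring
    simp only [h0, h1, min_self] at hG
    linarith
  · have := (((hasDerivAt_pow 5 y).div_const 180).add ((hasDerivAt_pow 7 y).const_mul c)).sub
      (hasDerivAt_remainder ⟨by linarith [hy.1], hy.2⟩)
    exact this.congr_deriv (by norm_num; ring)
  · have hwz := weight_sqrt_strictMonoOn ⟨hy.1.le, hy.2⟩ ⟨hz.1.le, hz.2⟩ hyz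
    have hwy : 7 * c ≤ weight √(1 - y ^ 2) := by
      by_contra! h
      have := pow_pos hy.1 6
      nlinarith
    have := pow_pos hz.1 6
    nlinarith

end Shafer

theorem shafer3_n3 (x : ℝ) (hx : x ∈ Set.Ioo (0 : ℝ) 1) :
    x ^ 5 / 180 + x ^ 7 / 189
      < Real.arcsin x - 3 * x / (2 + Real.sqrt (1 - x ^ 2)) ∧
    Real.arcsin x - 3 * x / (2 + Real.sqrt (1 - x ^ 2))
      < x ^ 5 / 180 + (-(271 / 180) + π / 2) * x ^ 7 :=
  ⟨Shafer.lower_bound hx, Shafer.upper_bound hx⟩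
end

section
/- For every x ∈ (0,1): x⁵/180 + x⁷/189 + 23x⁹/5184 < arcsin x − 3x/(2+√(1−x²)) < x⁵/180 + x⁷/189 + (−5711/3780 + π/2)·x⁹. -/
/-!
Put `s = √(1 - x²)` and `F x = arcsin x - 3x / (2 + s)`, so that `F' = (1 - s)² / (s (2 + s)²)`.
The lower bound holds because `F - x⁵/180 - x⁷/189 - 23x⁹/5184` vanishes at `0` and has positive
derivative on `(0, 1)`. For the upper bound, `W = F - x⁵/180 - x⁷/189` satisfies `8 W' < x W''`,
hence `9 W < x W'` (both sides vanish at `0`), so `W x / x⁹` increases on `(0, 1]` and stays below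
`W 1 = π/2 - 3/2 - 1/180 - 1/189`. After substituting `x² = 1 - s²`, both derivative inequalities
become `(1 - s)⁵` times a polynomial in `s` with positive coefficients.
-/

open Real Set

section DerivativeCriteria

variable {f f' f'' : ℝ → ℝ} {a : ℝ}

/-- `x f' x - c f x` vanishes at `0` and has derivative `x f'' x - (c - 1) f' x`. -/
theorem const_mul_lt_mul_deriv {c : ℝ} (hf0 : f 0 = 0)
    (hf : ∀ x ∈ Ico 0 a, HasDerivAt f (f' x) x) (hf' : ∀ x ∈ Ico 0 a, HasDerivAt f' (f'' x) x)
    (h : ∀ x ∈ Ioo 0 a, (c - 1) * f' x < x * f'' x) {x : ℝ} (hx : x ∈ Ioo 0 a) :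
    c * f x < x * f' x := by
  have hV : ∀ y ∈ Ico 0 a, HasDerivAt (fun y => y * f' y - c * f y)
      (1 * f' y + y * f'' y - c * f' y) y := fun y hy =>
    ((hasDerivAt_id y).mul (hf' y hy)).sub ((hf y hy).const_mul c)
  have hmono : StrictMonoOn (fun y => y * f' y - c * f y) (Ico 0 a) := by
    refine strictMonoOn_of_deriv_pos (convex_Ico 0 a)
      (fun y hy => (hV y hy).continuousAt.continuousWithinAt) fun y hy => ?_
    rw [interior_Ico] at hy
    rw [(hV y (Ioo_subset_Ico_self hy)).deriv]
    linarith [h y hy]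
  have := hmono (left_mem_Ico.2 (hx.1.trans hx.2)) (Ioo_subset_Ico_self hx) hx.1
  simp only [hf0, zero_mul, mul_zero, sub_zero] at this
  linarith

theorem strictMonoOn_div_pow {n : ℕ} (hfc : ContinuousOn f (Ioc 0 a))
    (hf : ∀ x ∈ Ioo 0 a, HasDerivAt f (f' x) x) (h : ∀ x ∈ Ioo 0 a, n * f x < x * f' x) :
    StrictMonoOn (fun x => f x / x ^ n) (Ioc 0 a) := by
  refine strictMonoOn_of_deriv_pos (convex_Ioc 0 a)
    (hfc.div (by fun_prop) fun x hx => pow_ne_zero n hx.1.ne') fun x hx => ?_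
  rw [interior_Ioc] at hx
  have hx0 := hx.1
  rw [((hf x hx).fun_div (hasDerivAt_pow n x) (pow_ne_zero n hx0.ne')).deriv]
  have key : (f' x * x ^ n - f x * (n * x ^ (n - 1))) * x = x ^ n * (x * f' x - n * f x) := by
    cases n <;> simp [pow_succ] <;> ring
  refine div_pos (pos_of_mul_pos_left (key ▸ ?_) hx0.le) (by positivity)
  exact mul_pos (by positivity) (sub_pos.2 (h x hx))

end DerivativeCriteria

theorem shafer_lower_poly_pos {x s : ℝ} (hs0 : 0 < s) (hs1 : s < 1) (hx2 : x ^ 2 = 1 - s ^ 2) :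
    0 < (1 - s) ^ 2 - s * (2 + s) ^ 2 * (x ^ 4 / 36 + x ^ 6 / 27 + 23 * x ^ 8 / 576) := by
  have key : (1 - s) ^ 2 - s * (2 + s) ^ 2 * (x ^ 4 / 36 + x ^ 6 / 27 + 23 * x ^ 8 / 576) =
      (1 - s) ^ 5 * (1728 + 4460 * s + 6024 * s ^ 2 + 4875 * s ^ 3 + 2351 * s ^ 4
        + 621 * s ^ 5 + 69 * s ^ 6) / 1728 := by
    rw [show x ^ 4 = (x ^ 2) ^ 2 by ring, show x ^ 6 = (x ^ 2) ^ 3 by ring,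
      show x ^ 8 = (x ^ 2) ^ 4 by ring, hx2]
    ring
  rw [key]
  have := pow_pos (sub_pos.2 hs1) 5
  positivity

theorem shafer_upper_poly_pos {x s : ℝ} (hs0 : 0 < s) (hs1 : s < 1) (hx2 : x ^ 2 = 1 - s ^ 2) :
    0 < x ^ 2 * ((1 - s) * (2 + 5 * s - s ^ 2)) - 8 * (s ^ 2 * (2 + s) * (1 - s) ^ 2)
      + s ^ 3 * (2 + s) ^ 3 * (x ^ 4 / 9 + 2 * x ^ 6 / 27) := by
  have key : x ^ 2 * ((1 - s) * (2 + 5 * s - s ^ 2)) - 8 * (s ^ 2 * (2 + s) * (1 - s) ^ 2)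
      + s ^ 3 * (2 + s) ^ 3 * (x ^ 4 / 9 + 2 * x ^ 6 / 27) =
      (1 - s) ^ 5 * (54 + 351 * s + 567 * s ^ 2 + 499 * s ^ 3 + 287 * s ^ 4 + 105 * s ^ 5
        + 22 * s ^ 6 + 2 * s ^ 7) / 27 := by
    rw [show x ^ 4 = (x ^ 2) ^ 2 by ring, show x ^ 6 = (x ^ 2) ^ 3 by ring, hx2]
    ring
  rw [key]
  have := pow_pos (sub_pos.2 hs1) 5
  positivity

theorem sqrt_one_sub_sq_pos {x : ℝ} (hx : x ∈ Ioo (-1) 1) : 0 < √(1 - x ^ 2) :=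
  sqrt_pos.2 (by nlinarith [hx.1, hx.2])

theorem hasDerivAt_sqrt_one_sub_sq {x : ℝ} (hx : x ∈ Ioo (-1) 1) :
    HasDerivAt (fun y => √(1 - y ^ 2)) (-x / √(1 - x ^ 2)) x := by
  have hpos : 0 < 1 - x ^ 2 := by nlinarith [hx.1, hx.2]
  convert ((hasDerivAt_pow 2 x).const_sub 1).sqrt hpos.ne' using 1
  field_simp
  push_cast
  ring

noncomputable def shaferRemainder (x : ℝ) : ℝ := arcsin x - 3 * x / (2 + √(1 - x ^ 2))

noncomputable def shaferRemainderDeriv (x : ℝ) : ℝ :=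
  (1 - √(1 - x ^ 2)) ^ 2 / (√(1 - x ^ 2) * (2 + √(1 - x ^ 2)) ^ 2)

noncomputable def shaferRemainderDeriv2 (x : ℝ) : ℝ :=
  x * (1 - √(1 - x ^ 2)) * (2 + 5 * √(1 - x ^ 2) - √(1 - x ^ 2) ^ 2) /
    (√(1 - x ^ 2) ^ 3 * (2 + √(1 - x ^ 2)) ^ 3)

theorem continuous_shaferRemainder : Continuous shaferRemainder :=
  continuous_arcsin.sub <| (continuous_const.mul continuous_id).div (by fun_prop)
    fun x => (add_pos_of_pos_of_nonneg two_pos (sqrt_nonneg _)).ne'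

theorem shaferRemainder_zero : shaferRemainder 0 = 0 := by simp [shaferRemainder]

theorem shaferRemainder_one : shaferRemainder 1 = π / 2 - 3 / 2 := by
  norm_num [shaferRemainder]

theorem hasDerivAt_shaferRemainder {x : ℝ} (hx : x ∈ Ioo (-1) 1) :
    HasDerivAt shaferRemainder (shaferRemainderDeriv x) x := by
  have hs := sqrt_one_sub_sq_pos hx
  have hs2 : √(1 - x ^ 2) ^ 2 = 1 - x ^ 2 := sq_sqrt (by nlinarith [hx.1, hx.2])
  have hq := ((hasDerivAt_id' x).const_mul 3).fun_div
    ((hasDerivAt_sqrt_one_sub_sq hx).const_add 2) (by positivity)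
  refine ((hasDerivAt_arcsin hx.1.ne' hx.2.ne).sub hq).congr_deriv ?_
  unfold shaferRemainderDeriv
  field_simp
  linear_combination -3 * hs2

theorem hasDerivAt_shaferRemainderDeriv {x : ℝ} (hx : x ∈ Ioo (-1) 1) :
    HasDerivAt shaferRemainderDeriv (shaferRemainderDeriv2 x) x := by
  have hs := sqrt_one_sub_sq_pos hx
  have hS := hasDerivAt_sqrt_one_sub_sq hx
  refine (((hS.const_sub 1).fun_pow 2).fun_div (hS.fun_mul ((hS.const_add 2).fun_pow 2))
    (mul_pos hs (by positivity)).ne').congr_deriv ?_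
  unfold shaferRemainderDeriv2
  field_simp
  ring

theorem lt_shaferRemainderDeriv {x : ℝ} (hx : x ∈ Ioo 0 1) :
    x ^ 4 / 36 + x ^ 6 / 27 + 23 * x ^ 8 / 576 < shaferRemainderDeriv x := by
  have hx' : x ∈ Ioo (-1) 1 := ⟨by linarith [hx.1], hx.2⟩
  rw [shaferRemainderDeriv]
  set s := √(1 - x ^ 2)
  have hs0 : 0 < s := sqrt_one_sub_sq_pos hx'
  have hs1 : s < 1 := (sqrt_lt' one_pos).2 (by nlinarith [hx.1])
  have hx2 : x ^ 2 = 1 - s ^ 2 := by rw [sq_sqrt (by nlinarith [hx'.1, hx'.2])]; ring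
  rw [lt_div_iff₀ (mul_pos hs0 (by positivity))]
  linarith [shafer_lower_poly_pos hs0 hs1 hx2]

theorem sub_mul_shaferRemainderDeriv_lt {x : ℝ} (hx : x ∈ Ioo 0 1) :
    8 * (shaferRemainderDeriv x - x ^ 4 / 36 - x ^ 6 / 27) <
      x * (shaferRemainderDeriv2 x - x ^ 3 / 9 - 2 * x ^ 5 / 9) := by
  have hx' : x ∈ Ioo (-1) 1 := ⟨by linarith [hx.1], hx.2⟩
  rw [shaferRemainderDeriv, shaferRemainderDeriv2]
  set s := √(1 - x ^ 2)
  have hs0 : 0 < s := sqrt_one_sub_sq_pos hx'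
  have hs1 : s < 1 := (sqrt_lt' one_pos).2 (by nlinarith [hx.1])
  have hx2 : x ^ 2 = 1 - s ^ 2 := by rw [sq_sqrt (by nlinarith [hx'.1, hx'.2])]; ring
  have key : x * (x * (1 - s) * (2 + 5 * s - s ^ 2) / (s ^ 3 * (2 + s) ^ 3) - x ^ 3 / 9
      - 2 * x ^ 5 / 9) - 8 * ((1 - s) ^ 2 / (s * (2 + s) ^ 2) - x ^ 4 / 36 - x ^ 6 / 27) =
      (x ^ 2 * ((1 - s) * (2 + 5 * s - s ^ 2)) - 8 * (s ^ 2 * (2 + s) * (1 - s) ^ 2)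
        + s ^ 3 * (2 + s) ^ 3 * (x ^ 4 / 9 + 2 * x ^ 6 / 27)) / (s ^ 3 * (2 + s) ^ 3) := by
    field_simp
    ring
  have := div_pos (shafer_upper_poly_pos hs0 hs1 hx2) (by positivity : 0 < s ^ 3 * (2 + s) ^ 3)
  linarith

theorem shaferRemainder_lower {x : ℝ} (hx : x ∈ Ioo 0 1) :
    x ^ 5 / 180 + x ^ 7 / 189 + 23 * x ^ 9 / 5184 < shaferRemainder x := by
  let g y := shaferRemainder y - (y ^ 5 / 180 + y ^ 7 / 189 + 23 * y ^ 9 / 5184)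
  have hg : ∀ y ∈ Ioo (-1) 1, HasDerivAt g
      (shaferRemainderDeriv y - (y ^ 4 / 36 + y ^ 6 / 27 + 23 * y ^ 8 / 576)) y := by
    intro y hy
    refine ((hasDerivAt_shaferRemainder hy).sub ((((hasDerivAt_pow 5 y).div_const 180).add
      ((hasDerivAt_pow 7 y).div_const 189)).add
      (((hasDerivAt_pow 9 y).const_mul 23).div_const 5184))).congr_deriv ?_
    push_cast
    ring
  have hmono : StrictMonoOn g (Icc 0 1) := by
    refine strictMonoOn_of_deriv_pos (convex_Icc 0 1)
      (continuous_shaferRemainder.sub (by fun_prop)).continuousOn fun y hy => ?_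
    rw [interior_Icc] at hy
    rw [(hg y ⟨by linarith [hy.1], hy.2⟩).deriv]
    linarith [lt_shaferRemainderDeriv hy]
  have := hmono (left_mem_Icc.2 zero_le_one) ⟨hx.1.le, hx.2.le⟩ hx.1
  simp only [g, shaferRemainder_zero] at this
  linarith

theorem shaferRemainder_upper {x : ℝ} (hx : x ∈ Ioo 0 1) :
    shaferRemainder x <
      x ^ 5 / 180 + x ^ 7 / 189 + (shaferRemainder 1 - 1 / 180 - 1 / 189) * x ^ 9 := by
  let W y := shaferRemainder y - y ^ 5 / 180 - y ^ 7 / 189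
  let W' y := shaferRemainderDeriv y - y ^ 4 / 36 - y ^ 6 / 27
  have hW : ∀ y ∈ Ioo (-1) 1, HasDerivAt W (W' y) y := by
    intro y hy
    refine (((hasDerivAt_shaferRemainder hy).sub ((hasDerivAt_pow 5 y).div_const 180)).sub
      ((hasDerivAt_pow 7 y).div_const 189)).congr_deriv ?_
    push_cast
    ring
  have hW' : ∀ y ∈ Ioo (-1) 1,
      HasDerivAt W' (shaferRemainderDeriv2 y - y ^ 3 / 9 - 2 * y ^ 5 / 9) y := by
    intro y hy
    refine (((hasDerivAt_shaferRemainderDeriv hy).sub ((hasDerivAt_pow 4 y).div_const 36)).sub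
      ((hasDerivAt_pow 6 y).div_const 27)).congr_deriv ?_
    push_cast
    ring
  have hsub : Ico (0 : ℝ) 1 ⊆ Ioo (-1) 1 := fun y hy => ⟨by linarith [hy.1], hy.2⟩
  have hEuler : ∀ y ∈ Ioo (0 : ℝ) 1, (9 : ℝ) * W y < y * W' y := fun y hy =>
    const_mul_lt_mul_deriv (by simp [W, shaferRemainder_zero]) (fun z hz => hW z (hsub hz))
      (fun z hz => hW' z (hsub hz))
      (fun z hz => by norm_num [W', sub_mul_shaferRemainderDeriv_lt hz]) hy
  have hmono := strictMonoOn_div_pow (f := W)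
    ((continuous_shaferRemainder.sub (by fun_prop)).sub (by fun_prop)).continuousOn
    (fun y hy => hW y (hsub (Ioo_subset_Ico_self hy))) (by exact_mod_cast hEuler)
  have := hmono ⟨hx.1, hx.2.le⟩ ⟨one_pos, le_rfl⟩ hx.2
  dsimp only at this
  rw [one_pow, div_one, div_lt_iff₀ (pow_pos hx.1 9)] at this
  simp only [W] at this
  linarith

theorem shafer3_n4 (x : ℝ) (hx : x ∈ Set.Ioo (0 : ℝ) 1) :
    x ^ 5 / 180 + x ^ 7 / 189 + 23 * x ^ 9 / 5184
      < Real.arcsin x - 3 * x / (2 + Real.sqrt (1 - x ^ 2)) ∧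
    Real.arcsin x - 3 * x / (2 + Real.sqrt (1 - x ^ 2))
      < x ^ 5 / 180 + x ^ 7 / 189 + (-(5711 / 3780) + π / 2) * x ^ 9 := by
  refine ⟨shaferRemainder_lower hx, ?_⟩
  have := shaferRemainder_upper hx
  rw [shaferRemainder_one] at this
  unfold shaferRemainder at this
  linarith
end

section
/- For every x ∈ (0,1): x⁵/180 + x⁷/189 + 23x⁹/5184 + 629x¹¹/171072 < arcsin x − 3x/(2+√(1−x²)) < x⁵/180 + x⁷/189 + 23x⁹/5184 + (−274933/181440 + π/2)·x¹¹. -/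
open Real Set

/-!
Write `G_c(t) = arcsin t - 3t/(2 + √(1 - t²)) - (t⁵/180 + t⁷/189 + 23t⁹/5184 + c t¹¹)`.
In the variable `σ = √(1 - t²)` its derivative is the rational function
`-(1 - σ)⁵ χ(σ) / (σ (2 + σ)²)`, where `χ(σ) = 11 (c - 629/171072) σ (1 + σ)⁵ (2 + σ)² - (1 - σ) ρ(σ)`
and `ρ` has positive coefficients.

For the Taylor coefficient `c = 629/171072` this derivative is positive, so `G_c(t) > G_c(0) = 0`.
For `c = π/2 - 274933/181440`, the value making `G_c(1) = 0`, the factor `χ` is negative on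
`(0, 1/64]` and increasing on `[1/64, 1]`; hence `G_c` first decreases and then increases on `[0, 1]`
and stays below its endpoint values `0`.
-/

theorem lt_max_of_deriv_neg_then_pos {f : ℝ → ℝ} {a b x : ℝ} (hf : ContinuousOn f (Icc a b))
    (hderiv : ∀ y ∈ Ioo a b, ∀ z ∈ Ioo a b, y < z → 0 ≤ deriv f y → 0 < deriv f z)
    (hx : x ∈ Ioo a b) : f x < max (f a) (f b) := by
  obtain ⟨hax, hxb⟩ := hx
  rcases le_or_gt 0 (deriv f x) with hfx | hfx
  · have hmono : StrictMonoOn f (Icc x b) := by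
      refine strictMonoOn_of_deriv_pos (convex_Icc x b)
        (hf.mono (Icc_subset_Icc hax.le le_rfl)) fun z hz => ?_
      rw [interior_Icc] at hz
      exact hderiv x ⟨hax, hxb⟩ z ⟨hax.trans hz.1, hz.2⟩ hz.1 hfx
    exact (hmono (left_mem_Icc.2 hxb.le) (right_mem_Icc.2 hxb.le) hxb).trans_le
      (le_max_right _ _)
  · have hanti : StrictAntiOn f (Icc a x) := by
      refine strictAntiOn_of_deriv_neg (convex_Icc a x)
        (hf.mono (Icc_subset_Icc le_rfl hxb.le)) fun y hy => ?_
      rw [interior_Icc] at hy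
      by_contra! hy'
      exact (hderiv y ⟨hy.1, hy.2.trans hxb⟩ x ⟨hax, hxb⟩ hy.2 hy').not_gt hfx
    exact (hanti (left_mem_Icc.2 hax.le) (right_mem_Icc.2 hax.le) hax).trans_le
      (le_max_left _ _)

noncomputable section

def shafer (t : ℝ) : ℝ := 3 * t / (2 + √(1 - t^2))

def shaferGap (c t : ℝ) : ℝ :=
  arcsin t - shafer t - (t^5/180 + t^7/189 + 23 * t^9/5184 + c * t^11)

def shaferRho (s : ℝ) : ℝ :=
  1 + 6647/1944 * s + 11537/1944 * s^2 + 48901/7776 * s^3 + 2729/648 * s^4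
    + 27055/15552 * s^5 + 3145/7776 * s^6 + 629/15552 * s^7

def shaferChi (D s : ℝ) : ℝ :=
  D * (s * (1 + s)^5 * (2 + s)^2) - (1 - s) * shaferRho s

end

lemma shaferRho_pos {s : ℝ} (hs : 0 ≤ s) : 0 < shaferRho s := by
  unfold shaferRho; positivity

lemma hasDerivAt_shaferChi (D s : ℝ) :
    HasDerivAt (shaferChi D)
      (D * (4 + 48*s + 183*s^2 + 340*s^3 + 350*s^4 + 204*s^5 + 63*s^6 + 8*s^7)
        + (-4703/1944 - 815/162*s - 2753/2592*s^2 + 16153/1944*s^3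
          + 192205/15552*s^4 + 20765/2592*s^5 + 4403/1728*s^6 + 629/1944*s^7)) s := by
  have hg := (((hasDerivAt_id s).mul (((hasDerivAt_id s).const_add 1).pow 5)).mul
    (((hasDerivAt_id s).const_add 2).pow 2)).const_mul D
  have hρ := (((((((((hasDerivAt_id s).const_mul (6647/1944 : ℝ)).const_add 1).add
    ((hasDerivAt_pow 2 s).const_mul (11537/1944 : ℝ))).add
    ((hasDerivAt_pow 3 s).const_mul (48901/7776 : ℝ))).add
    ((hasDerivAt_pow 4 s).const_mul (2729/648 : ℝ))).add
    ((hasDerivAt_pow 5 s).const_mul (27055/15552 : ℝ))).add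
    ((hasDerivAt_pow 6 s).const_mul (3145/7776 : ℝ))).add
    ((hasDerivAt_pow 7 s).const_mul (629/15552 : ℝ)))
  refine ((hg.sub (((hasDerivAt_id s).const_sub 1).mul hρ)).congr_deriv ?_).congr_of_eventuallyEq
    (.of_forall fun u => ?_)
  · simp only [id_eq, Pi.pow_apply, Pi.mul_apply, Pi.add_apply, Nat.cast_ofNat]
    ring
  · simp [shaferChi, shaferRho]

lemma shaferChi_neg_of_le {D s : ℝ} (hD : D < 58/100) (hs₀ : 0 < s) (hs : s ≤ 1/64) :
    shaferChi D s < 0 := by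
  have hg : 0 ≤ s * (1 + s)^5 * (2 + s)^2 := by positivity
  have e2 : s^2 ≤ (1/64) * s := by nlinarith
  have e3 : s^3 ≤ (1/64)^2 * s := by nlinarith
  have e4 : s^4 ≤ (1/64)^3 * s := by nlinarith
  have e5 : s^5 ≤ (1/64)^4 * s := by nlinarith
  have e6 : s^6 ≤ (1/64)^5 * s := by nlinarith
  have e7 : s^7 ≤ (1/64)^6 * s := by nlinarith
  have e8 : s^8 ≤ (1/64)^7 * s := by nlinarith
  have key : 58/100 * (s * (1 + s)^5 * (2 + s)^2) - (1 - s) * shaferRho s < 0 := by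
    unfold shaferRho; nlinarith
  unfold shaferChi
  nlinarith [mul_le_mul_of_nonneg_right hD.le hg]

lemma strictMonoOn_shaferChi {D : ℝ} (hD : 57/100 < D) :
    StrictMonoOn (shaferChi D) (Icc (1/64) 1) := by
  refine strictMonoOn_of_deriv_pos (convex_Icc _ _)
    (fun s _ => (hasDerivAt_shaferChi D s).continuousAt.continuousWithinAt) fun s hs => ?_
  rw [interior_Icc] at hs
  rw [(hasDerivAt_shaferChi D s).deriv]
  have ht : 0 ≤ s - 1/64 := by linarith [hs.1]
  have hg : 0 ≤ 4 + 48*s + 183*s^2 + 340*s^3 + 350*s^4 + 204*s^5 + 63*s^6 + 8*s^7 := by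
    have : 0 ≤ s := by linarith
    positivity
  have base : 0 < 57/100 * (4 + 48*s + 183*s^2 + 340*s^3 + 350*s^4 + 204*s^5 + 63*s^6 + 8*s^7)
      + (-4703/1944 - 815/162*s - 2753/2592*s^2 + 16153/1944*s^3
        + 192205/15552*s^4 + 20765/2592*s^5 + 4403/1728*s^6 + 629/1944*s^7) := by
    nlinarith [pow_nonneg ht 2, pow_nonneg ht 3, pow_nonneg ht 4,
      pow_nonneg ht 5, pow_nonneg ht 6, pow_nonneg ht 7]
  nlinarith [mul_le_mul_of_nonneg_right hD.le hg]

lemma shaferChi_neg_of_lt_of_nonpos {D s t : ℝ} (hD : D ∈ Ioo (57/100) (58/100)) (hs : 0 < s)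
    (hst : s < t) (ht : t ≤ 1) (hχ : shaferChi D t ≤ 0) : shaferChi D s < 0 := by
  rcases le_or_gt s (1/64) with hs64 | hs64
  · exact shaferChi_neg_of_le hD.2 hs hs64
  · exact (strictMonoOn_shaferChi hD.1 ⟨hs64.le, hst.le.trans ht⟩
      ⟨hs64.le.trans hst.le, ht⟩ hst).trans_le hχ

lemma continuous_shafer : Continuous shafer :=
  Continuous.div (by fun_prop) (by fun_prop) fun t => by positivity

lemma continuous_shaferGap (c : ℝ) : Continuous (shaferGap c) :=
  (continuous_arcsin.sub continuous_shafer).sub (by fun_prop)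

lemma shaferGap_zero (c : ℝ) : shaferGap c 0 = 0 := by
  simp [shaferGap, shafer]

lemma shaferGap_one : shaferGap (-(274933 / 181440) + π / 2) 1 = 0 := by
  norm_num [shaferGap, shafer, arcsin_one]
  ring

lemma hasDerivAt_shafer {y : ℝ} (hy : y ∈ Ioo (-1) 1) :
    HasDerivAt shafer
      ((3 * (2 + √(1 - y^2)) + 3 * y^2 / √(1 - y^2)) / (2 + √(1 - y^2))^2) y := by
  have hy2 : 0 < 1 - y^2 := by nlinarith [hy.1, hy.2]
  have hσ : 0 < √(1 - y^2) := sqrt_pos.2 hy2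
  have hsqrt : HasDerivAt (fun t => 2 + √(1 - t^2)) (1 / (2 * √(1 - y^2)) * -(2 * y)) y := by
    refine ((hasDerivAt_sqrt hy2.ne').comp y ?_).const_add 2
    simpa using (hasDerivAt_pow 2 y).const_sub 1
  refine (((hasDerivAt_id' y).const_mul 3).div hsqrt (by positivity)).congr_deriv ?_
  field_simp
  ring

lemma hasDerivAt_shaferPoly (c y : ℝ) :
    HasDerivAt (fun t => t^5/180 + t^7/189 + 23 * t^9/5184 + c * t^11)
      ((y^2)^2/36 + (y^2)^3/27 + 23 * (y^2)^4/576 + 11 * c * (y^2)^5) y := by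
  refine (((((hasDerivAt_pow 5 y).div_const 180).add ((hasDerivAt_pow 7 y).div_const 189)).add
    (((hasDerivAt_pow 9 y).const_mul 23).div_const 5184)).add
    ((hasDerivAt_pow 11 y).const_mul c)).congr_deriv ?_
  push_cast
  ring

lemma hasDerivAt_shaferGap (c : ℝ) {y : ℝ} (hy : y ∈ Ioo (-1) 1) :
    HasDerivAt (shaferGap c)
      (-((1 - √(1 - y^2))^5 / (√(1 - y^2) * (2 + √(1 - y^2))^2)
        * shaferChi (11 * (c - 629/171072)) (√(1 - y^2)))) y := by
  refine (((hasDerivAt_arcsin hy.1.ne' hy.2.ne).sub (hasDerivAt_shafer hy)).sub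
    (hasDerivAt_shaferPoly c y)).congr_deriv ?_
  have hσ : 0 < √(1 - y^2) := sqrt_pos.2 (by nlinarith [hy.1, hy.2])
  have hσ2 : √(1 - y^2)^2 = 1 - y^2 := sq_sqrt (by nlinarith [hy.1, hy.2])
  set σ := √(1 - y^2)
  rw [show y^2 = 1 - σ^2 by linarith]
  unfold shaferChi shaferRho
  field_simp
  ring

lemma sqrt_one_sub_sq_mem_Ioo {y : ℝ} (hy : y ∈ Ioo 0 1) : √(1 - y^2) ∈ Ioo 0 1 :=
  ⟨sqrt_pos.2 (by nlinarith [hy.1, hy.2]), (sqrt_lt' one_pos).2 (by nlinarith [hy.1])⟩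

lemma sqrt_one_sub_sq_lt {y z : ℝ} (hy : 0 < y) (hyz : y < z) (hz : z < 1) :
    √(1 - z^2) < √(1 - y^2) :=
  sqrt_lt_sqrt (by nlinarith) (by nlinarith)

lemma one_sub_pow_div_mul_two_add_sq_pos {s : ℝ} (hs : s ∈ Ioo 0 1) : 0 < (1 - s)^5 / (s * (2 + s)^2) := by
  have := hs.1; have := sub_pos.2 hs.2
  positivity

lemma strictMonoOn_shaferGap : StrictMonoOn (shaferGap (629/171072)) (Icc 0 1) := by
  refine strictMonoOn_of_deriv_pos (convex_Icc 0 1) (continuous_shaferGap _).continuousOn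
    fun y hy => ?_
  rw [interior_Icc] at hy
  have hσ := sqrt_one_sub_sq_mem_Ioo hy
  rw [(hasDerivAt_shaferGap _ ⟨by linarith [hy.1], hy.2⟩).deriv, sub_self, mul_zero]
  simp only [shaferChi, zero_mul, zero_sub, mul_neg, neg_neg]
  exact mul_pos (one_sub_pow_div_mul_two_add_sq_pos hσ) (mul_pos (sub_pos.2 hσ.2) (shaferRho_pos hσ.1.le))

lemma deriv_shaferGap_pos_of_lt_of_nonneg {c : ℝ}
    (hc : 11 * (c - 629/171072) ∈ Ioo (57/100) (58/100)) :
    ∀ y ∈ Ioo (0 : ℝ) 1, ∀ z ∈ Ioo (0 : ℝ) 1, y < z →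
      0 ≤ deriv (shaferGap c) y → 0 < deriv (shaferGap c) z := by
  intro y hy z hz hyz hdy
  have hσy := sqrt_one_sub_sq_mem_Ioo hy
  have hσz := sqrt_one_sub_sq_mem_Ioo hz
  rw [(hasDerivAt_shaferGap c ⟨by linarith [hy.1], hy.2⟩).deriv] at hdy
  rw [(hasDerivAt_shaferGap c ⟨by linarith [hz.1], hz.2⟩).deriv, neg_pos]
  have hχy : shaferChi (11 * (c - 629/171072)) √(1 - y^2) ≤ 0 :=
    nonpos_of_mul_nonpos_right (neg_nonneg.1 hdy) (one_sub_pow_div_mul_two_add_sq_pos hσy)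
  exact mul_neg_of_pos_of_neg (one_sub_pow_div_mul_two_add_sq_pos hσz) (shaferChi_neg_of_lt_of_nonpos hc hσz.1
    (sqrt_one_sub_sq_lt hy.1 hyz hz.2) hσy.2.le hχy)

theorem shafer3_n5 (x : ℝ) (hx : x ∈ Set.Ioo (0 : ℝ) 1) :
    x ^ 5 / 180 + x ^ 7 / 189 + 23 * x ^ 9 / 5184 + 629 * x ^ 11 / 171072
      < Real.arcsin x - 3 * x / (2 + Real.sqrt (1 - x ^ 2)) ∧
    Real.arcsin x - 3 * x / (2 + Real.sqrt (1 - x ^ 2))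
      < x ^ 5 / 180 + x ^ 7 / 189 + 23 * x ^ 9 / 5184
        + (-(274933 / 181440) + π / 2) * x ^ 11 := by
  constructor
  · have h := strictMonoOn_shaferGap (left_mem_Icc.2 zero_le_one) (Ioo_subset_Icc_self hx) hx.1
    rw [shaferGap_zero] at h
    unfold shaferGap shafer at h
    linarith
  · have hD : 11 * (-(274933 / 181440) + π / 2 - 629 / 171072) ∈ Ioo (57/100 : ℝ) (58/100) :=
      ⟨by linarith [pi_gt_d6], by linarith [pi_lt_d6]⟩
    have h := lt_max_of_deriv_neg_then_pos (continuous_shaferGap _).continuousOn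
      (deriv_shaferGap_pos_of_lt_of_nonneg hD) hx
    rw [shaferGap_zero, shaferGap_one, max_self] at h
    unfold shaferGap shafer at h
    linarith
end
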